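/- arXiv:2603.13143 — 2 statements merged into one kernel-verified Lean document; each statement's English description precedes it below -/
import Mathlib

section
/- The discrete vector field 𝒱 on X̃ defined by the prism pairing scheme is acyclic; that is, there is no nontrivial closed 𝒱-trajectory, so 𝒱 is a gradient vector field on X̃. -/
open scoped Classical

noncomputable section

namespace DMT

variable {V : Type*} {U : Type*}

/-- An abstract simplicial complex: a nonempty collection of nonempty finite
sets of vertices that is closed under taking nonempty subsets. -/
def IsComplex (K : Set (Finset V)) : Prop :=
  K.Nonempty ∧ ∀ σ ∈ K, σ.Nonempty ∧ ∀ τ : Finset V, τ ⊆ σ → τ.Nonempty → τ ∈ K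

/-- The incidence number `⟨τ, σ⟩` of `σ` with respect to `τ`, where simplices are
oriented by listing their vertices increasingly: it is `(-1)^i` if `σ` is obtained
from `τ` by deleting the `i`-th vertex, and `0` if `σ` is not a facet of `τ`. -/
def incidence [LinearOrder V] (τ σ : Finset V) : ℤ :=
  if σ ⊆ τ ∧ τ.card = σ.card + 1 then
    ∑ v ∈ τ \ σ, (-1 : ℤ) ^ (τ.filter fun u => u < v).card
  else 0

/-- A discrete vector field on a complex `K`: a set of pairs `(σ, τ)` of simplices of `K`
with `σ` a facet of `τ`, such that every simplex appears in at most one pair. -/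
def IsDVF (K : Set (Finset U)) (W : Set (Finset U × Finset U)) : Prop :=
  (∀ p ∈ W, p.1 ∈ K ∧ p.2 ∈ K ∧ p.1 ⊆ p.2 ∧ p.2.card = p.1.card + 1) ∧
  ∀ p ∈ W, ∀ p' ∈ W, (p.1 = p'.1 ∨ p.1 = p'.2 ∨ p.2 = p'.1 ∨ p.2 = p'.2) → p = p'

/-- A simplex is critical for `W` if it appears in no pair of `W`. -/
def IsCritical (W : Set (Finset U × Finset U)) (σ : Finset U) : Prop :=
  ∀ p ∈ W, p.1 ≠ σ ∧ p.2 ≠ σ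

/-- The set of `q`-dimensional `W`-critical simplices of `K`. -/
def critSet (K : Set (Finset U)) (W : Set (Finset U × Finset U)) (q : ℕ) : Set (Finset U) :=
  {σ | σ ∈ K ∧ σ.card = q + 1 ∧ IsCritical W σ}

/-- A `W`-trajectory `τ₀, σ₁, τ₁, …, σ_k, τ_k`. -/
structure Traj (W : Set (Finset U × Finset U)) where
  k : ℕ
  t : ℕ → Finset U
  s : ℕ → Finset U
  dim_t : ∀ i ≤ k, (t i).card = (t 0).card
  dim_s : ∀ i, 1 ≤ i → i ≤ k → (s i).card + 1 = (t 0).card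
  mem : ∀ i, 1 ≤ i → i ≤ k → (s i, t i) ∈ W
  sub : ∀ i, 1 ≤ i → i ≤ k → s i ⊆ t (i - 1)
  nmem : ∀ i, 1 ≤ i → i ≤ k → (s i, t (i - 1)) ∉ W

/-- `W` is acyclic: there is no nontrivial closed `W`-trajectory. -/
def IsAcyclic (W : Set (Finset U × Finset U)) : Prop :=
  ¬ ∃ P : Traj W, 1 < P.k ∧ P.t 0 = P.t P.k

/-- A gradient vector field on `K`: an acyclic discrete vector field. -/
def IsGVF (K : Set (Finset U)) (W : Set (Finset U × Finset U)) : Prop :=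
  IsDVF K W ∧ IsAcyclic W

/-- An extended `W`-trajectory `τ₀, σ₁, τ₁, …, σ_k, τ_k, σ_{k+1}`, with
`(σᵢ, τᵢ) ∈ W` for `1 ≤ i ≤ k`, and `σᵢ ⊆ τ_{i-1}`, `(σᵢ, τ_{i-1}) ∉ W` for
`1 ≤ i ≤ k + 1`.  (The values of `t` and `s` outside the relevant ranges are
normalized to `∅`.) -/
structure ExtTraj (W : Set (Finset U × Finset U)) where
  k : ℕ
  t : ℕ → Finset U
  s : ℕ → Finset U
  dim_t : ∀ i ≤ k, (t i).card = (t 0).card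
  dim_s : ∀ i, 1 ≤ i → i ≤ k + 1 → (s i).card + 1 = (t 0).card
  mem : ∀ i, 1 ≤ i → i ≤ k → (s i, t i) ∈ W
  sub : ∀ i, 1 ≤ i → i ≤ k + 1 → s i ⊆ t (i - 1)
  nmem : ∀ i, 1 ≤ i → i ≤ k + 1 → (s i, t (i - 1)) ∉ W
  pad_t : ∀ i, k < i → t i = ∅
  pad_s : ∀ i, i = 0 ∨ k + 1 < i → s i = ∅

/-- The weight of an extended trajectory. -/
def ExtTraj.weight [LinearOrder U] {W : Set (Finset U × Finset U)} (P : ExtTraj W) : ℤ :=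
  (∏ i ∈ Finset.range P.k,
      -(incidence (P.t i) (P.s (i + 1)) * incidence (P.t (i + 1)) (P.s (i + 1)))) *
    incidence (P.t P.k) (P.s (P.k + 1))

/-- `Γ(τ, σ)`: the extended `W`-trajectories with initial simplex `τ` and terminal
simplex `σ`. -/
def Gamma (W : Set (Finset U × Finset U)) (τ σ : Finset U) : Set (ExtTraj W) :=
  {P | P.t 0 = τ ∧ P.s (P.k + 1) = σ}

/-- The Thom–Smale boundary coefficient `Σ_{P ∈ Γ(τ,σ)} w(P)`. -/
def tsCoeff [LinearOrder U] (W : Set (Finset U × Finset U)) (τ σ : Finset U) : ℤ :=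
  ∑ᶠ P ∈ Gamma W τ σ, ExtTraj.weight P

/-- The copy of a complex under a vertex map. -/
def copy [DecidableEq U] (f : V → U) (K : Set (Finset V)) : Set (Finset U) :=
  {σ | ∃ γ ∈ K, σ = γ.image f}

/-- Pull a simplex of a copy back to the original vertex set. -/
def pull [Fintype V] [DecidableEq U] (f : V → U) (σ : Finset U) : Finset V :=
  Finset.univ.filter fun v => f v ∈ σ

/-- The ground simplex of a simplex of the prism (with `a`-vertices and `b`-vertices). -/
def GS [Fintype V] [DecidableEq U] (a b : V → U) (σ : Finset U) : Finset V :=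
  Finset.univ.filter fun v => a v ∈ σ ∨ b v ∈ σ

/-- The simplex `{a_{i₀}, …, a_{i_r}, b_{i_r}, …, b_{i_q}}` of the prism over
`γ = {v_{i₀} < … < v_{i_q}}`, with pivot `v = v_{i_r}`. -/
def mixA [LinearOrder V] [DecidableEq U] (a b : V → U) (γ : Finset V) (v : V) : Finset U :=
  (γ.filter fun u => u ≤ v).image a ∪ (γ.filter fun u => v ≤ u).image b

/-- The simplex `{a_{i₀}, …, a_{i_{r-1}}, b_{i_r}, …, b_{i_q}}` of the prism over
`γ`, with pivot `v = v_{i_r}`. -/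
def mixB [LinearOrder V] [DecidableEq U] (a b : V → U) (γ : Finset V) (v : V) : Finset U :=
  (γ.filter fun u => u < v).image a ∪ (γ.filter fun u => v ≤ u).image b

/-- `A_γ`. -/
def AsetOf [LinearOrder V] [DecidableEq U] (a b : V → U) (γ : Finset V) : Set (Finset U) :=
  {σ | ∃ v ∈ γ, σ = mixA a b γ v}

/-- `B_γ`. -/
def BsetOf [LinearOrder V] [DecidableEq U] (a b : V → U) (γ : Finset V) : Set (Finset U) :=
  {σ | ∃ v ∈ γ, σ = mixB a b γ v} ∪ {γ.image a}

/-- `S_γ = A_γ ∪ B_γ`. -/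
def SsetOf [LinearOrder V] [DecidableEq U] (a b : V → U) (γ : Finset V) : Set (Finset U) :=
  AsetOf a b γ ∪ BsetOf a b γ

/-- The prism `ℙ(C)` over the complex `C`, realized with `a`-vertices and `b`-vertices. -/
def prism [LinearOrder V] [DecidableEq U] (a b : V → U) (C : Set (Finset V)) :
    Set (Finset U) :=
  ⋃ γ ∈ C, SsetOf a b γ

/-- The interior simplices of the prism. -/
def prismInt [LinearOrder V] [DecidableEq U] (a b : V → U) (C : Set (Finset V)) :
    Set (Finset U) :=
  prism a b C \ (copy a C ∪ copy b C)

/-- The complex `X̃ = Ā ∪ ℙ((A ∩ B)‾) ∪ B̄`. -/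
def tilde [LinearOrder V] [DecidableEq U] (a b : V → U) (A B : Set (Finset V)) :
    Set (Finset U) :=
  copy a A ∪ prism a b (A ∩ B) ∪ copy b B

/-- The prism pairing `𝒱`: for each `γ ∈ C` and `v ∈ γ`, the pair
`([a_{i₀},…,a_{i_{r-1}}, b_{i_r},…,b_{i_q}], [a_{i₀},…,a_{i_r}, b_{i_r},…,b_{i_q}])`. -/
def prismVF [LinearOrder V] [DecidableEq U] (a b : V → U) (C : Set (Finset V)) :
    Set (Finset U × Finset U) :=
  {p | ∃ γ ∈ C, ∃ v ∈ γ, p = (mixB a b γ v, mixA a b γ v)}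

/-- `v` is the minimum vertex of `γ`. -/
def isMin [Preorder V] (γ : Finset V) (v : V) : Prop :=
  v ∈ γ ∧ ∀ u ∈ γ, v ≤ u

/-- The pairing `W'` of the interior simplices of the prism, induced by the gradient
vector field `WC` on the copy (under `c`) of the intersection complex `C`. -/
def WprimeSet [Fintype V] [LinearOrder V] [DecidableEq U] (a b c : V → U)
    (C : Set (Finset V)) (WC : Set (Finset U × Finset U)) : Set (Finset U × Finset U) :=
  {p | ∃ pr ∈ WC, ∃ v, isMin (pull c pr.1) v ∧
      p = (mixA a b (pull c pr.1) v, mixA a b (pull c pr.2) v)} ∪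
  {p | ∃ pr ∈ WC, ∃ v vm am, isMin (pull c pr.2) vm ∧ isMin (pull c pr.1) am ∧
      v ∈ pull c pr.2 ∧ v ≠ vm ∧
      p = (mixB a b (pull c pr.2) v, mixA a b (pull c pr.2) (if v = am then vm else v))} ∪
  {p | ∃ pr ∈ WC, ∃ v am, isMin (pull c pr.1) am ∧ v ∈ pull c pr.1 ∧ v ≠ am ∧
      p = (mixB a b (pull c pr.1) v, mixA a b (pull c pr.1) v)} ∪
  {p | ∃ γ : Finset V, γ ∈ C ∧ IsCritical WC (γ.image c) ∧
      ∃ v vm, isMin γ vm ∧ v ∈ γ ∧ v ≠ vm ∧ p = (mixB a b γ v, mixA a b γ v)}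

/-- The discrete vector field `W = W_Ā ∪ W_B̄ ∪ W'` on `X̃`. -/
def Wfield [Fintype V] [LinearOrder V] [DecidableEq U] (a b c : V → U)
    (C : Set (Finset V)) (WA WB WC : Set (Finset U × Finset U)) :
    Set (Finset U × Finset U) :=
  WA ∪ WB ∪ WprimeSet a b c C WC

/-- Transfer a simplex of the copy under `c` to the corresponding simplex of the copy
under `f`. -/
def transferMap [Fintype V] [DecidableEq U] (c f : V → U) (σ : Finset U) : Finset U :=
  (pull c σ).image f

/-- A mixed (Mayer–Vietoris) trajectory: a descending extended trajectory
`τ₀, σ₁, τ₁, …, σ_p, τ_p` for `WC` in the copy of the intersection, transferred by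
`tr` into another copy, followed by an ascending path
`τ'_p, α_p, τ'_{p+1}, …, α_{p+l-1}, τ'_{p+l}` for `WD`. -/
structure MixTraj (WC WD : Set (Finset U × Finset U)) (tr : Finset U → Finset U) where
  p : ℕ
  l : ℕ
  t : ℕ → Finset U
  s : ℕ → Finset U
  t' : ℕ → Finset U
  a' : ℕ → Finset U
  dim_t : ∀ i ≤ p, (t i).card = (t 0).card
  dim_s : ∀ i, 1 ≤ i → i ≤ p → (s i).card + 1 = (t 0).card
  dim_t' : ∀ i, p ≤ i → i ≤ p + l → (t' i).card = (t 0).card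
  dim_a' : ∀ i, p ≤ i → i < p + l → (a' i).card = (t 0).card + 1
  mem_s : ∀ i, 1 ≤ i → i ≤ p → (s i, t i) ∈ WC
  sub_s : ∀ i, 1 ≤ i → i ≤ p → s i ⊆ t (i - 1)
  nmem_s : ∀ i, 1 ≤ i → i ≤ p → (s i, t (i - 1)) ∉ WC
  link : t' p = tr (t p)
  mem_a : ∀ i, p ≤ i → i < p + l → (t' i, a' i) ∈ WD
  sub_a : ∀ i, p + 1 ≤ i → i ≤ p + l → t' i ⊆ a' (i - 1)
  nmem_a : ∀ i, p + 1 ≤ i → i ≤ p + l → (t' i, a' (i - 1)) ∉ WD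
  pad_t : ∀ i, p < i → t i = ∅
  pad_s : ∀ i, i = 0 ∨ p < i → s i = ∅
  pad_t' : ∀ i, i < p ∨ p + l < i → t' i = ∅
  pad_a' : ∀ i, i < p ∨ p + l ≤ i → a' i = ∅

/-- The product of incidence signs along a mixed trajectory (without the leading sign). -/
def MixTraj.wcore [LinearOrder U] {WC WD : Set (Finset U × Finset U)}
    {tr : Finset U → Finset U} (P : MixTraj WC WD tr) : ℤ :=
  (∏ i ∈ Finset.range P.p,
      -(incidence (P.t i) (P.s (i + 1)) * incidence (P.t (i + 1)) (P.s (i + 1)))) *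
  ∏ i ∈ Finset.range P.l,
      -(incidence (P.a' (P.p + i)) (P.t' (P.p + i)) *
        incidence (P.a' (P.p + i)) (P.t' (P.p + i + 1)))

/-- A Mayer–Vietoris trajectory: one of the five kinds. -/
inductive MVTraj (WA WB WC : Set (Finset U × Finset U)) (trA trB : Finset U → Finset U)
  | viaA : ExtTraj WA → MVTraj WA WB WC trA trB
  | viaB : ExtTraj WB → MVTraj WA WB WC trA trB
  | viaC : ExtTraj WC → MVTraj WA WB WC trA trB
  | crossA : MixTraj WC WA trA → MVTraj WA WB WC trA trB
  | crossB : MixTraj WC WB trB → MVTraj WA WB WC trA trB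

/-- The weight `w_M` of a Mayer–Vietoris trajectory. -/
def MVTraj.wM [LinearOrder U] {WA WB WC : Set (Finset U × Finset U)}
    {trA trB : Finset U → Finset U} : MVTraj WA WB WC trA trB → ℤ
  | .viaA P => P.weight
  | .viaB P => P.weight
  | .viaC P => -P.weight
  | .crossA P => -P.wcore
  | .crossB P => P.wcore

/-- A Mayer–Vietoris trajectory goes from `β` to `α` (with the required criticality of
the endpoints in the respective copies `Abar`, `Bbar`, `Cbar`). -/
def MVTraj.ends {WA WB WC : Set (Finset U × Finset U)} {trA trB : Finset U → Finset U}
    (Abar Bbar Cbar : Set (Finset U)) :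
    MVTraj WA WB WC trA trB → Finset U → Finset U → Prop
  | .viaA T, β, α => T.t 0 = β ∧ T.s (T.k + 1) = α ∧
      β ∈ Abar ∧ IsCritical WA β ∧ α ∈ Abar ∧ IsCritical WA α
  | .viaB T, β, α => T.t 0 = β ∧ T.s (T.k + 1) = α ∧
      β ∈ Bbar ∧ IsCritical WB β ∧ α ∈ Bbar ∧ IsCritical WB α
  | .viaC T, β, α => T.t 0 = β ∧ T.s (T.k + 1) = α ∧
      β ∈ Cbar ∧ IsCritical WC β ∧ α ∈ Cbar ∧ IsCritical WC α
  | .crossA T, β, α => T.t 0 = β ∧ T.t' (T.p + T.l) = α ∧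
      β ∈ Cbar ∧ IsCritical WC β ∧ α ∈ Abar ∧ IsCritical WA α
  | .crossB T, β, α => T.t 0 = β ∧ T.t' (T.p + T.l) = α ∧
      β ∈ Cbar ∧ IsCritical WC β ∧ α ∈ Bbar ∧ IsCritical WB α

/-- `MV(β, α)`: the set of Mayer–Vietoris trajectories from `β` to `α`. -/
def MVset (WA WB WC : Set (Finset U × Finset U)) (trA trB : Finset U → Finset U)
    (Abar Bbar Cbar : Set (Finset U)) (β α : Finset U) :
    Set (MVTraj WA WB WC trA trB) :=
  {P | MVTraj.ends Abar Bbar Cbar P β α}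

/-- The Mayer–Vietoris boundary coefficient `Σ_{P ∈ MV(β,α)} w_M(P)`. -/
def mvCoeff [LinearOrder U] (WA WB WC : Set (Finset U × Finset U))
    (trA trB : Finset U → Finset U) (Abar Bbar Cbar : Set (Finset U))
    (β α : Finset U) : ℤ :=
  ∑ᶠ P ∈ MVset WA WB WC trA trB Abar Bbar Cbar β α, MVTraj.wM P

/-- The generating sets `D_q(X)`. -/
def Dset (Abar Bbar Cbar : Set (Finset U)) (WA WB WC : Set (Finset U × Finset U)) :
    ℕ → Set (Finset U)
  | 0 => critSet Abar WA 0 ∪ critSet Bbar WB 0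
  | (q + 1) => critSet Abar WA (q + 1) ∪ critSet Bbar WB (q + 1) ∪ critSet Cbar WC q

/-- The `q`-dimensional simplices of a complex. -/
def simpSet (K : Set (Finset V)) (q : ℕ) : Set (Finset V) :=
  {σ | σ ∈ K ∧ σ.card = q + 1}

/-- The boundary homomorphism of a chain complex of free abelian groups, determined by a
matrix of coefficients. -/
def chainBoundary {ι κ : Type*} (coeff : ι → κ → ℤ) : (ι →₀ ℤ) →ₗ[ℤ] (κ →₀ ℤ) :=
  Finsupp.lsum ℤ fun i =>
    LinearMap.toSpanSingleton ℤ (κ →₀ ℤ) (∑ᶠ j : κ, coeff i j • Finsupp.single j 1)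

/-- The family of boundary maps of the chain complex of free abelian groups with
generating sets `S q` and boundary coefficients `coeff` (with the convention that the
boundary in degree `0` is the zero map). -/
def fullBoundary {W : Type*} (S : ℕ → Set (Finset W)) (coeff : Finset W → Finset W → ℤ) :
    ∀ q : ℕ, ((S q : Set (Finset W)) →₀ ℤ) →+ ((S (q - 1) : Set (Finset W)) →₀ ℤ)
  | 0 => 0
  | (q + 1) => (chainBoundary fun (i : (S (q + 1) : Set (Finset W))) (j : (S q : Set (Finset W))) =>
      coeff (i : Finset W) (j : Finset W)).toAddMonoidHom

/-- `ker d ⧸ im d'`. -/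
abbrev homologyAt {L M N : Type*} [AddCommGroup L] [AddCommGroup M] [AddCommGroup N]
    (d : M →+ N) (d' : L →+ M) : Type _ :=
  (↥d.ker) ⧸ (AddSubgroup.comap d.ker.subtype d'.range)

/-- The `q`-th homology group of the chain complex of free abelian groups with
generating sets `S` and boundary coefficients `coeff`. -/
abbrev homologyOf {W : Type*} (S : ℕ → Set (Finset W)) (coeff : Finset W → Finset W → ℤ)
    (q : ℕ) : Type _ :=
  homologyAt (fullBoundary S coeff q) (fullBoundary S coeff (q + 1))

/-- The map `f` from critical simplices of `X̃` to generators of the Mayer–Vietoris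
complex: the identity on critical simplices of `Ā` and `B̄`, and the (copy in
`(A ∩ B)‾` of the) ground simplex on interior critical simplices of the prism. -/
def fmap [Fintype V] [LinearOrder V] [DecidableEq U] (a b c : V → U)
    (C : Set (Finset V)) (τ : Finset U) : Finset U :=
  if τ ∈ prismInt a b C then (GS a b τ).image c else τ

/-- The simplex `[a_{i₀}, b_{i₀}, …, b_{i_{q-1}}]` of the prism over `γ`. -/
def aMinCopy [Fintype V] [LinearOrder V] [DecidableEq U] (a b : V → U) (γ : Finset V) :
    Finset U :=
  (γ.filter fun u => ∀ w ∈ γ, u ≤ w).image a ∪ γ.image b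

/-- The map `g` from generators of the Mayer–Vietoris complex to critical simplices of
`X̃`: the identity on critical simplices of `Ā` and `B̄`, and
`[c_{i₀},…,c_{i_{q-1}}] ↦ [a_{i₀}, b_{i₀}, …, b_{i_{q-1}}]` on critical simplices of
`(A ∩ B)‾`. -/
def gmap [Fintype V] [LinearOrder V] [DecidableEq U] (a b c : V → U)
    (Cbar : Set (Finset U)) (α : Finset U) : Finset U :=
  if α ∈ Cbar then aMinCopy a b (pull c α) else α


section PrismLemmas

variable {V : Type*} {U : Type*} [LinearOrder V] [DecidableEq U]
variable {a b : V → U}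

lemma a_mem_mixA (hai : Function.Injective a) (hab : ∀ u v : V, a u ≠ b v)
    {γ : Finset V} {v u : V} : a u ∈ mixA a b γ v ↔ u ∈ γ ∧ u ≤ v := by
  simp only [mixA, Finset.mem_union, Finset.mem_image, Finset.mem_filter]
  constructor
  · rintro (⟨w, ⟨hw, hwv⟩, he⟩ | ⟨w, _, he⟩)
    · rcases hai he with rfl; exact ⟨hw, hwv⟩
    · exact absurd he.symm (hab u w)
  · rintro ⟨h1, h2⟩; exact Or.inl ⟨u, ⟨h1, h2⟩, rfl⟩

lemma b_mem_mixA (hbi : Function.Injective b) (hab : ∀ u v : V, a u ≠ b v)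
    {γ : Finset V} {v u : V} : b u ∈ mixA a b γ v ↔ u ∈ γ ∧ v ≤ u := by
  simp only [mixA, Finset.mem_union, Finset.mem_image, Finset.mem_filter]
  constructor
  · rintro (⟨w, _, he⟩ | ⟨w, ⟨hw, hwv⟩, he⟩)
    · exact absurd he (hab w u)
    · rcases hbi he with rfl; exact ⟨hw, hwv⟩
  · rintro ⟨h1, h2⟩; exact Or.inr ⟨u, ⟨h1, h2⟩, rfl⟩

lemma a_mem_mixB (hai : Function.Injective a) (hab : ∀ u v : V, a u ≠ b v)
    {γ : Finset V} {v u : V} : a u ∈ mixB a b γ v ↔ u ∈ γ ∧ u < v := by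
  simp only [mixB, Finset.mem_union, Finset.mem_image, Finset.mem_filter]
  constructor
  · rintro (⟨w, ⟨hw, hwv⟩, he⟩ | ⟨w, _, he⟩)
    · rcases hai he with rfl; exact ⟨hw, hwv⟩
    · exact absurd he.symm (hab u w)
  · rintro ⟨h1, h2⟩; exact Or.inl ⟨u, ⟨h1, h2⟩, rfl⟩

lemma b_mem_mixB (hbi : Function.Injective b) (hab : ∀ u v : V, a u ≠ b v)
    {γ : Finset V} {v u : V} : b u ∈ mixB a b γ v ↔ u ∈ γ ∧ v ≤ u := by
  simp only [mixB, Finset.mem_union, Finset.mem_image, Finset.mem_filter]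
  constructor
  · rintro (⟨w, _, he⟩ | ⟨w, ⟨hw, hwv⟩, he⟩)
    · exact absurd he (hab w u)
    · rcases hbi he with rfl; exact ⟨hw, hwv⟩
  · rintro ⟨h1, h2⟩; exact Or.inr ⟨u, ⟨h1, h2⟩, rfl⟩

lemma disj_ab_images (hab : ∀ u v : V, a u ≠ b v) (s t : Finset V) :
    Disjoint (s.image a) (t.image b) := by
  rw [Finset.disjoint_left]
  rintro x hx1 hx2
  obtain ⟨u, _, rfl⟩ := Finset.mem_image.1 hx1
  obtain ⟨w, _, he⟩ := Finset.mem_image.1 hx2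
  exact hab u w he.symm

lemma card_mixA (hai : Function.Injective a) (hbi : Function.Injective b)
    (hab : ∀ u v : V, a u ≠ b v) {γ : Finset V} {v : V} (hv : v ∈ γ) :
    (mixA a b γ v).card = γ.card + 1 := by
  rw [mixA, Finset.card_union_of_disjoint (disj_ab_images hab _ _),
    Finset.card_image_of_injective _ hai, Finset.card_image_of_injective _ hbi]
  have h := Finset.card_union_add_card_inter (γ.filter fun u => u ≤ v)
    (γ.filter fun u => v ≤ u)
  have h1 : (γ.filter fun u => u ≤ v) ∪ (γ.filter fun u => v ≤ u) = γ := by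
    ext u; simp only [Finset.mem_union, Finset.mem_filter]
    constructor
    · rintro (⟨h, _⟩ | ⟨h, _⟩) <;> exact h
    · intro h; rcases le_total u v with h' | h'
      exacts [Or.inl ⟨h, h'⟩, Or.inr ⟨h, h'⟩]
  have h2 : (γ.filter fun u => u ≤ v) ∩ (γ.filter fun u => v ≤ u) = {v} := by
    ext u; simp only [Finset.mem_inter, Finset.mem_filter, Finset.mem_singleton]
    constructor
    · rintro ⟨⟨_, ha1⟩, _, ha2⟩; exact le_antisymm ha1 ha2
    · rintro rfl; exact ⟨⟨hv, le_rfl⟩, hv, le_rfl⟩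
  rw [h1, h2, Finset.card_singleton] at h
  omega

lemma card_mixB (hai : Function.Injective a) (hbi : Function.Injective b)
    (hab : ∀ u v : V, a u ≠ b v) {γ : Finset V} {v : V} :
    (mixB a b γ v).card = γ.card := by
  rw [mixB, Finset.card_union_of_disjoint (disj_ab_images hab _ _),
    Finset.card_image_of_injective _ hai, Finset.card_image_of_injective _ hbi]
  have h := Finset.card_filter_add_card_filter_not (s := γ) (p := fun u => u < v)
  simp only [not_lt] at h
  exact h

lemma mixB_subset_mixA {γ : Finset V} {v : V} : mixB a b γ v ⊆ mixA a b γ v := by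
  intro x hx
  rw [mixB, Finset.mem_union] at hx
  rw [mixA, Finset.mem_union]
  rcases hx with h | h
  · left
    obtain ⟨u, hu, rfl⟩ := Finset.mem_image.1 h
    rw [Finset.mem_filter] at hu
    exact Finset.mem_image.2 ⟨u, Finset.mem_filter.2 ⟨hu.1, le_of_lt hu.2⟩, rfl⟩
  · exact Or.inr h

lemma mixA_inj (hai : Function.Injective a) (hbi : Function.Injective b)
    (hab : ∀ u v : V, a u ≠ b v) {γ γ' : Finset V} {v v' : V}
    (hv : v ∈ γ) (hv' : v' ∈ γ') (h : mixA a b γ v = mixA a b γ' v') :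
    γ = γ' ∧ v = v' := by
  have hvv : v = v' := by
    have h1 : a v ∈ mixA a b γ' v' := h ▸ (a_mem_mixA hai hab).2 ⟨hv, le_rfl⟩
    have h2 : b v ∈ mixA a b γ' v' := h ▸ (b_mem_mixA hbi hab).2 ⟨hv, le_rfl⟩
    exact le_antisymm ((a_mem_mixA hai hab).1 h1).2 ((b_mem_mixA hbi hab).1 h2).2
  subst hvv
  refine ⟨?_, rfl⟩
  ext u
  constructor
  · intro hu
    rcases le_total u v with h' | h'
    · exact ((a_mem_mixA hai hab).1 (h ▸ (a_mem_mixA hai hab).2 ⟨hu, h'⟩)).1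
    · exact ((b_mem_mixA hbi hab).1 (h ▸ (b_mem_mixA hbi hab).2 ⟨hu, h'⟩)).1
  · intro hu
    rcases le_total u v with h' | h'
    · exact ((a_mem_mixA hai hab).1 (h.symm ▸ (a_mem_mixA hai hab).2 ⟨hu, h'⟩)).1
    · exact ((b_mem_mixA hbi hab).1 (h.symm ▸ (b_mem_mixA hbi hab).2 ⟨hu, h'⟩)).1

lemma mixB_inj (hai : Function.Injective a) (hbi : Function.Injective b)
    (hab : ∀ u v : V, a u ≠ b v) {γ γ' : Finset V} {v v' : V}
    (hv : v ∈ γ) (hv' : v' ∈ γ') (h : mixB a b γ v = mixB a b γ' v') :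
    γ = γ' ∧ v = v' := by
  have hvv : v = v' := by
    have h1 : b v ∈ mixB a b γ' v' := h ▸ (b_mem_mixB hbi hab).2 ⟨hv, le_rfl⟩
    have h2 : b v' ∈ mixB a b γ v := h.symm ▸ (b_mem_mixB hbi hab).2 ⟨hv', le_rfl⟩
    exact le_antisymm ((b_mem_mixB hbi hab).1 h2).2 ((b_mem_mixB hbi hab).1 h1).2
  subst hvv
  refine ⟨?_, rfl⟩
  ext u
  constructor
  · intro hu
    rcases lt_or_ge u v with h' | h'
    · exact ((a_mem_mixB hai hab).1 (h ▸ (a_mem_mixB hai hab).2 ⟨hu, h'⟩)).1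
    · exact ((b_mem_mixB hbi hab).1 (h ▸ (b_mem_mixB hbi hab).2 ⟨hu, h'⟩)).1
  · intro hu
    rcases lt_or_ge u v with h' | h'
    · exact ((a_mem_mixB hai hab).1 (h.symm ▸ (a_mem_mixB hai hab).2 ⟨hu, h'⟩)).1
    · exact ((b_mem_mixB hbi hab).1 (h.symm ▸ (b_mem_mixB hbi hab).2 ⟨hu, h'⟩)).1

lemma mixB_ne_mixA (hai : Function.Injective a) (hbi : Function.Injective b)
    (hab : ∀ u v : V, a u ≠ b v) {γ γ' : Finset V} {v v' : V}
    (hv : v ∈ γ) (hv' : v' ∈ γ') : mixB a b γ' v' ≠ mixA a b γ v := by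
  intro h
  have h1 : a v ∈ mixB a b γ' v' := h.symm ▸ (a_mem_mixA hai hab).2 ⟨hv, le_rfl⟩
  have h2 : b v ∈ mixB a b γ' v' := h.symm ▸ (b_mem_mixA hbi hab).2 ⟨hv, le_rfl⟩
  exact absurd (lt_of_lt_of_le ((a_mem_mixB hai hab).1 h1).2
    ((b_mem_mixB hbi hab).1 h2).2) (lt_irrefl v)

lemma key_sub (hai : Function.Injective a) (hbi : Function.Injective b)
    (hab : ∀ u v : V, a u ≠ b v) {γ γ' : Finset V} {v v' : V}
    (hsub : mixB a b γ' v' ⊆ mixA a b γ v) (hv : v ∈ γ) (hv' : v' ∈ γ')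
    (hcard : γ'.card = γ.card) : γ' = γ ∧ v ≤ v' := by
  have hss : γ' ⊆ γ := by
    intro u hu
    rcases lt_or_ge u v' with h | h
    · exact ((a_mem_mixA hai hab).1 (hsub ((a_mem_mixB hai hab).2 ⟨hu, h⟩))).1
    · exact ((b_mem_mixA hbi hab).1 (hsub ((b_mem_mixB hbi hab).2 ⟨hu, h⟩))).1
  exact ⟨Finset.eq_of_subset_of_card_le hss hcard.ge,
    ((b_mem_mixA hbi hab).1 (hsub ((b_mem_mixB hbi hab).2 ⟨hv', le_rfl⟩))).2⟩

end PrismLemmas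

/-- The prism pairing `𝒱` on `X̃` is an acyclic discrete vector
field, i.e. a gradient vector field on `X̃`. -/
theorem prism_pairing_is_gvf
    {V : Type*} {U : Type*} [Fintype V] [LinearOrder V] [LinearOrder U]
    (X A B : Set (Finset V)) (a b : V → U)
    (hX : IsComplex X) (hA : IsComplex A) (hB : IsComplex B)
    (hUnion : A ∪ B = X)
    (ha : StrictMono a) (hb : StrictMono b)
    (hab : ∀ u v : V, a u ≠ b v) :
    IsGVF (tilde a b A B) (prismVF a b (A ∩ B)) := by
  have hai := ha.injective
  have hbi := hb.injective
  constructor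
  · constructor
    · rintro ⟨σ, τ⟩ ⟨γ, hγ, v, hv, hp⟩
      simp only [Prod.mk.injEq] at hp
      obtain ⟨rfl, rfl⟩ := hp
      refine ⟨?_, ?_, mixB_subset_mixA, ?_⟩
      · exact Or.inl (Or.inr (Set.mem_biUnion hγ (Or.inr (Or.inl ⟨v, hv, rfl⟩))))
      · exact Or.inl (Or.inr (Set.mem_biUnion hγ (Or.inl ⟨v, hv, rfl⟩)))
      · rw [card_mixA hai hbi hab hv, card_mixB hai hbi hab]
    · rintro ⟨σ, τ⟩ ⟨γ, hγ, v, hv, hp⟩ ⟨σ', τ'⟩ ⟨γ', hγ', v', hv', hp'⟩ hcase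
      simp only [Prod.mk.injEq] at hp hp'
      obtain ⟨rfl, rfl⟩ := hp
      obtain ⟨rfl, rfl⟩ := hp'
      rcases hcase with h | h | h | h
      · obtain ⟨rfl, rfl⟩ := mixB_inj hai hbi hab hv hv' h; rfl
      · exact absurd h (mixB_ne_mixA hai hbi hab hv' hv)
      · exact absurd h.symm (mixB_ne_mixA hai hbi hab hv hv')
      · obtain ⟨rfl, rfl⟩ := mixA_inj hai hbi hab hv hv' h; rfl
  · rintro ⟨P, hk, hclose⟩
    have hk1 : 1 ≤ P.k := le_of_lt hk
    obtain ⟨γ₁, hγ₁, v₁, hv₁, _⟩ := P.mem 1 le_rfl hk1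
    haveI : Nonempty V := ⟨v₁⟩
    have H : ∀ i, ∃ γ : Finset V, ∃ w : V, 1 ≤ i → i ≤ P.k →
        γ ∈ A ∩ B ∧ w ∈ γ ∧ P.s i = mixB a b γ w ∧ P.t i = mixA a b γ w := by
      intro i
      by_cases h : 1 ≤ i ∧ i ≤ P.k
      · obtain ⟨γ, hγ, w, hw, hp⟩ := P.mem i h.1 h.2
        simp only [Prod.mk.injEq] at hp
        exact ⟨γ, w, fun _ _ => ⟨hγ, hw, hp.1, hp.2⟩⟩
      · exact ⟨∅, Classical.arbitrary V, fun h1 h2 => absurd ⟨h1, h2⟩ h⟩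
    choose g w hg using H
    have hcard : ∀ i, 1 ≤ i → i ≤ P.k → (g i).card + 1 = (P.t 0).card := by
      intro i h1 h2
      have hd := P.dim_s i h1 h2
      rw [(hg i h1 h2).2.2.1, card_mixB hai hbi hab] at hd
      exact hd
    have step : ∀ i, 1 ≤ i → i ≤ P.k → ∀ γ : Finset V, ∀ v : V, γ ∈ A ∩ B → v ∈ γ →
        P.t (i - 1) = mixA a b γ v → (g i).card = γ.card → g i = γ ∧ v < w i := by
      intro i h1 h2 γ v hγ hv ht hc
      obtain ⟨hγi, hwi, hsi, hti⟩ := hg i h1 h2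
      have hsub := P.sub i h1 h2
      rw [ht, hsi] at hsub
      obtain ⟨heq, hle⟩ := key_sub hai hbi hab hsub hv hwi hc
      refine ⟨heq, lt_of_le_of_ne hle ?_⟩
      intro hvw
      exact P.nmem i h1 h2 ⟨γ, hγ, v, hv, by rw [hsi, heq, ht, hvw]⟩
    have chain : ∀ j, 1 ≤ j → j ≤ P.k → w 1 ≤ w j ∧ g j = g 1 := by
      intro j
      induction j with
      | zero => intro h; omega
      | succ n ih =>
        intro _ h2
        rcases Nat.eq_zero_or_pos n with rfl | hn1
        · exact ⟨le_rfl, rfl⟩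
        · have hnk : n ≤ P.k := le_trans (Nat.le_succ n) h2
          obtain ⟨ihle, iheq⟩ := ih hn1 hnk
          obtain ⟨hγn, hwn, hsn, htn⟩ := hg n hn1 hnk
          have hc : (g (n + 1)).card = (g n).card := by
            have := hcard (n + 1) (Nat.le_add_left 1 n) h2
            have := hcard n hn1 hnk
            omega
          have ht : P.t (n + 1 - 1) = mixA a b (g n) (w n) := by
            simpa using htn
          obtain ⟨heq, hlt⟩ := step (n + 1) (Nat.le_add_left 1 n) h2 (g n) (w n) hγn hwn ht hc
          exact ⟨le_of_lt (lt_of_le_of_lt ihle hlt), heq.trans iheq⟩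
    obtain ⟨hwk, hgk⟩ := chain P.k hk1 le_rfl
    obtain ⟨hγk, hwk', hsk, htk⟩ := hg P.k hk1 le_rfl
    have hc1 : (g 1).card = (g P.k).card := by
      have := hcard 1 le_rfl hk1
      have := hcard P.k hk1 le_rfl
      omega
    have ht0 : P.t (1 - 1) = mixA a b (g P.k) (w P.k) := by
      simpa [hclose] using htk
    obtain ⟨_, hlt⟩ := step 1 le_rfl hk1 (g P.k) (w P.k) hγk hwk' ht0 hc1
    exact absurd hwk (not_le.2 hlt)

end DMT
end
end

section
/- The 𝒱-critical simplices of X̃ (those appearing in no pair of the prism pairing 𝒱) are precisely the simplices of (X̃ ∖ ℙ((A∩B)‾)) ∪ (A∩B)_Ā, which equals Ā ∪ (B̄ ∖ (A∩B)_B̄). -/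
open scoped Classical

noncomputable section

namespace DMT

variable {V : Type*} {U : Type*}

section Aux

variable {V' : Type*} {U' : Type*} [LinearOrder V'] [LinearOrder U']

lemma aux_b_mem_mixB (a b : V' → U') (γ : Finset V') (v : V') (hv : v ∈ γ) :
    b v ∈ mixB a b γ v :=
  Finset.mem_union.2 (Or.inr (Finset.mem_image_of_mem b (Finset.mem_filter.2 ⟨hv, le_rfl⟩)))

lemma aux_b_mem_mixA (a b : V' → U') (γ : Finset V') (v : V') (hv : v ∈ γ) :
    b v ∈ mixA a b γ v :=
  Finset.mem_union.2 (Or.inr (Finset.mem_image_of_mem b (Finset.mem_filter.2 ⟨hv, le_rfl⟩)))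

lemma aux_a_mem_mixA (a b : V' → U') (γ : Finset V') (v : V') (hv : v ∈ γ) :
    a v ∈ mixA a b γ v :=
  Finset.mem_union.2 (Or.inl (Finset.mem_image_of_mem a (Finset.mem_filter.2 ⟨hv, le_rfl⟩)))

lemma aux_a_mem_mixB (a b : V' → U') (γ : Finset V') (u v : V') (hu : u ∈ γ)
    (huv : u < v) : a u ∈ mixB a b γ v :=
  Finset.mem_union.2 (Or.inl (Finset.mem_image_of_mem a (Finset.mem_filter.2 ⟨hu, huv⟩)))

lemma aux_mem_prism_iff (a b : V' → U') (C : Set (Finset V')) (σ : Finset U') :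
    σ ∈ prism a b C ↔ ∃ γ ∈ C, ((∃ v ∈ γ, σ = mixA a b γ v) ∨
      (∃ v ∈ γ, σ = mixB a b γ v) ∨ σ = γ.image a) := by
  simp only [prism, Set.mem_iUnion, SsetOf, AsetOf, BsetOf, Set.mem_union,
    Set.mem_setOf_eq, Set.mem_singleton_iff]
  constructor
  · rintro ⟨γ, hγ, h⟩
    exact ⟨γ, hγ, by tauto⟩
  · rintro ⟨γ, hγ, h⟩
    exact ⟨γ, hγ, by tauto⟩

lemma aux_imageb_eq_mixB (a b : V' → U') (γ : Finset V') (hγ : γ.Nonempty) :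
    γ.image b = mixB a b γ (γ.min' hγ) := by
  have h1 : (γ.filter fun u => u < γ.min' hγ) = ∅ := by
    apply Finset.filter_eq_empty_iff.2
    intro u hu
    exact not_lt.2 (γ.min'_le u hu)
  have h2 : (γ.filter fun u => γ.min' hγ ≤ u) = γ :=
    Finset.filter_true_of_mem fun u hu => γ.min'_le u hu
  rw [mixB, h1, h2, Finset.image_empty, Finset.empty_union]

end Aux

/-- The `𝒱`-critical simplices of `X̃` are precisely the simplices
of `(X̃ ∖ ℙ((A∩B)‾)) ∪ (A∩B)_Ā`, which equals `Ā ∪ (B̄ ∖ (A∩B)_B̄)`. -/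
theorem prism_pairing_critical_simplices
    {V : Type*} {U : Type*} [Fintype V] [LinearOrder V] [LinearOrder U]
    (X A B : Set (Finset V)) (a b : V → U)
    (hX : IsComplex X) (hA : IsComplex A) (hB : IsComplex B)
    (hUnion : A ∪ B = X)
    (ha : StrictMono a) (hb : StrictMono b)
    (hab : ∀ u v : V, a u ≠ b v) :
    {σ | σ ∈ tilde a b A B ∧ IsCritical (prismVF a b (A ∩ B)) σ} =
        (tilde a b A B \ prism a b (A ∩ B)) ∪ copy a (A ∩ B) ∧
      (tilde a b A B \ prism a b (A ∩ B)) ∪ copy a (A ∩ B) =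
        copy a A ∪ (copy b B \ copy b (A ∩ B)) := by
  classical
  -- no `a`-vertex equals a `b`-vertex
  have hnb : ∀ (δ : Finset V) (w : V), b w ∉ δ.image a := by
    intro δ w h
    obtain ⟨u, _, hu⟩ := Finset.mem_image.1 h
    exact hab u w hu
  have hna : ∀ (δ : Finset V) (w : V), a w ∉ δ.image b := by
    intro δ w h
    obtain ⟨u, _, hu⟩ := Finset.mem_image.1 h
    exact hab w u hu.symm
  -- both components of any pair lie in the prism
  have hpairP : ∀ p ∈ prismVF a b (A ∩ B),
      p.1 ∈ prism a b (A ∩ B) ∧ p.2 ∈ prism a b (A ∩ B) := by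
    rintro p ⟨γ, hγ, v, hv, rfl⟩
    exact ⟨(aux_mem_prism_iff a b _ _).2 ⟨γ, hγ, Or.inr (Or.inl ⟨v, hv, rfl⟩)⟩,
      (aux_mem_prism_iff a b _ _).2 ⟨γ, hγ, Or.inl ⟨v, hv, rfl⟩⟩⟩
  -- `a`-copies are critical
  have hacrit : ∀ δ : Finset V, IsCritical (prismVF a b (A ∩ B)) (δ.image a) := by
    rintro δ p ⟨γ, hγ, v, hv, rfl⟩
    constructor
    · intro h
      exact hnb δ v (h ▸ aux_b_mem_mixB a b γ v hv)
    · intro h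
      exact hnb δ v (h ▸ aux_b_mem_mixA a b γ v hv)
  -- anything outside the prism is critical
  have houtcrit : ∀ σ : Finset U, σ ∉ prism a b (A ∩ B) →
      IsCritical (prismVF a b (A ∩ B)) σ := by
    intro σ hσ p hp
    obtain ⟨h1, h2⟩ := hpairP p hp
    exact ⟨fun h => hσ (h ▸ h1), fun h => hσ (h ▸ h2)⟩
  -- `copy a (A ∩ B) ⊆ copy a A`, and it is contained in the prism
  have hCaA : copy a (A ∩ B) ⊆ copy a A := by
    rintro σ ⟨γ, hγ, rfl⟩
    exact ⟨γ, hγ.1, rfl⟩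
  have hCaP : copy a (A ∩ B) ⊆ prism a b (A ∩ B) := by
    rintro σ ⟨γ, hγ, rfl⟩
    exact (aux_mem_prism_iff a b _ _).2 ⟨γ, hγ, Or.inr (Or.inr rfl)⟩
  have hCbB : copy b (A ∩ B) ⊆ copy b B := by
    rintro σ ⟨γ, hγ, rfl⟩
    exact ⟨γ, hγ.2, rfl⟩
  have hCbP : copy b (A ∩ B) ⊆ prism a b (A ∩ B) := by
    rintro σ ⟨γ, hγ, rfl⟩
    have hγne : γ.Nonempty := (hA.2 γ hγ.1).1
    refine (aux_mem_prism_iff a b _ _).2 ⟨γ, hγ, Or.inr (Or.inl ⟨γ.min' hγne, γ.min'_mem hγne, ?_⟩)⟩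
    exact aux_imageb_eq_mixB a b γ hγne
  -- `copy a A ∩ prism = copy a (A ∩ B)`
  have hAint : ∀ σ, σ ∈ copy a A → σ ∈ prism a b (A ∩ B) → σ ∈ copy a (A ∩ B) := by
    rintro σ ⟨δ, hδ, rfl⟩ hP
    obtain ⟨γ, hγ, h⟩ := (aux_mem_prism_iff a b _ _).1 hP
    rcases h with ⟨v, hv, h⟩ | ⟨v, hv, h⟩ | h
    · exact absurd (h ▸ aux_b_mem_mixA a b γ v hv) (hnb δ v)
    · exact absurd (h ▸ aux_b_mem_mixB a b γ v hv) (hnb δ v)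
    · exact ⟨γ, hγ, h⟩
  -- `copy b B ∩ prism = copy b (A ∩ B)`
  have hBint : ∀ σ, σ ∈ copy b B → σ ∈ prism a b (A ∩ B) → σ ∈ copy b (A ∩ B) := by
    rintro σ ⟨δ, hδ, rfl⟩ hP
    obtain ⟨γ, hγ, h⟩ := (aux_mem_prism_iff a b _ _).1 hP
    have hγne : γ.Nonempty := (hA.2 γ hγ.1).1
    rcases h with ⟨v, hv, h⟩ | ⟨v, hv, h⟩ | h
    · exact absurd (h ▸ aux_a_mem_mixA a b γ v hv) (hna δ v)
    · by_cases hmin : ∃ u ∈ γ, u < v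
      · obtain ⟨u, hu, huv⟩ := hmin
        exact absurd (h ▸ aux_a_mem_mixB a b γ u v hu huv) (hna δ u)
      · push_neg at hmin
        have hvmin : v = γ.min' hγne :=
          le_antisymm (hmin _ (γ.min'_mem hγne)) (γ.min'_le v hv)
        refine ⟨γ, hγ, ?_⟩
        rw [h, hvmin, aux_imageb_eq_mixB a b γ hγne]
    · obtain ⟨u, hu⟩ := hγne
      have : a u ∈ δ.image b := by
        rw [h]
        exact Finset.mem_image_of_mem a hu
      exact absurd this (hna δ u)
  have hCaT : copy a (A ∩ B) ⊆ tilde a b A B := fun σ hσ =>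
    Or.inl (Or.inl (hCaA hσ))
  constructor
  · -- first equality
    ext σ
    simp only [Set.mem_setOf_eq, Set.mem_union, Set.mem_diff]
    constructor
    · rintro ⟨hT, hcrit⟩
      by_cases hP : σ ∈ prism a b (A ∩ B)
      · obtain ⟨γ, hγ, h⟩ := (aux_mem_prism_iff a b _ _).1 hP
        rcases h with ⟨v, hv, h⟩ | ⟨v, hv, h⟩ | h
        · exact absurd h.symm (hcrit (mixB a b γ v, mixA a b γ v) ⟨γ, hγ, v, hv, rfl⟩).2
        · exact absurd h.symm (hcrit (mixB a b γ v, mixA a b γ v) ⟨γ, hγ, v, hv, rfl⟩).1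
        · exact Or.inr ⟨γ, hγ, h⟩
      · exact Or.inl ⟨hT, hP⟩
    · rintro (⟨hT, hP⟩ | hCa)
      · exact ⟨hT, houtcrit σ hP⟩
      · refine ⟨hCaT hCa, ?_⟩
        obtain ⟨γ, _, rfl⟩ := hCa
        exact hacrit γ
  · -- second equality
    ext σ
    simp only [Set.mem_union, Set.mem_diff, tilde]
    constructor
    · rintro (⟨hT, hP⟩ | hCa)
      · rcases hT with (hA' | hPm) | hB'
        · exact Or.inl hA'
        · exact absurd hPm hP
        · exact Or.inr ⟨hB', fun hCb => hP (hCbP hCb)⟩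
      · exact Or.inl (hCaA hCa)
    · rintro (hA' | ⟨hB', hCb⟩)
      · by_cases hP : σ ∈ prism a b (A ∩ B)
        · exact Or.inr (hAint σ hA' hP)
        · exact Or.inl ⟨Or.inl (Or.inl hA'), hP⟩
      · by_cases hP : σ ∈ prism a b (A ∩ B)
        · exact absurd (hBint σ hB' hP) hCb
        · exact Or.inl ⟨Or.inr hB', hP⟩

end DMT
end
end
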